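/- arXiv:2307.13713 — 6 statements merged into one kernel-verified Lean document; each statement's English description precedes it below -/
import Mathlib

section
/- If ρ ≠ 1, then the set of fixed points of the update function f on [0,1] is exactly {0, 1/2, 1}, i.e. for x ∈ [0,1] one has f(x) = x if and only if x ∈ {0, 1/2, 1}. -/
/-!
Writing `N / D` for the fraction defining `Γ`, one has the factorisation
`N - x D = x (1 - x) (2x - 1) (aα - bβ)`. Since `D > 0` on `[0,1]` and `f` is a proper convex
combination of the identity and `Γ`, the fixed points of `f` are the roots of this cubic, and
`ρ ≠ 1` means exactly that its last factor does not vanish.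
-/

theorem div_add_mul_one_add_eq_self_iff {K : Type*} [Field K] {x y lam : K} (hlam : lam ≠ 0)
    (hlam' : 1 + lam ≠ 0) : (x + lam * y) / (1 + lam) = x ↔ y = x := by
  rw [div_eq_iff hlam', ← sub_eq_zero, ← sub_eq_zero (a := y)]
  constructor
  · intro h
    exact (mul_eq_zero.mp (by linear_combination h : lam * (y - x) = 0)).resolve_left hlam
  · intro h
    linear_combination lam * h

section SymmetricFraction

variable {p q x : ℝ}

theorem symmetric_denom_pos (hp : 0 < p) (hq : 0 ≤ q) (hx : x ∈ Set.Icc (0 : ℝ) 1) :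
    0 < p * x ^ 2 + 2 * q * x * (1 - x) + p * (1 - x) ^ 2 := by
  obtain ⟨hx0, hx1⟩ := hx
  have hmid : 0 ≤ q * x * (1 - x) := mul_nonneg (mul_nonneg hq hx0) (by linarith)
  nlinarith [sq_nonneg (2 * x - 1)]

theorem symmetric_fraction_eq_self_iff (hp : 0 < p) (hq : 0 ≤ q) (hpq : p ≠ q)
    (hx : x ∈ Set.Icc (0 : ℝ) 1) :
    (p * x ^ 2 + q * x * (1 - x)) / (p * x ^ 2 + 2 * q * x * (1 - x) + p * (1 - x) ^ 2) = x ↔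
      x = 0 ∨ x = 1 / 2 ∨ x = 1 := by
  rw [div_eq_iff (symmetric_denom_pos hp hq hx).ne', ← sub_eq_zero]
  have hfactor : p * x ^ 2 + q * x * (1 - x) - x * (p * x ^ 2 + 2 * q * x * (1 - x) +
      p * (1 - x) ^ 2) = x * (1 - x) * (2 * x - 1) * (p - q) := by ring
  rw [hfactor]
  simp only [mul_eq_zero, sub_eq_zero, hpq, or_false]
  constructor
  · rintro ((h | h) | h)
    · exact Or.inl h
    · exact Or.inr (Or.inr h.symm)
    · exact Or.inr (Or.inl (by linarith))
  · rintro (h | h | h)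
    · exact Or.inl (Or.inl h)
    · exact Or.inr (by linarith)
    · exact Or.inl (Or.inr h.symm)

end SymmetricFraction

/-- If `ρ ≠ 1`, the set of fixed points of the update function `f` on `[0,1]` is exactly
`{0, 1/2, 1}`. -/
theorem stmt_2 (a b α β lam : ℝ) (ha : 0 < a) (hb : 0 < b) (hα : 0 < α) (hβ : 0 < β)
    (hlam : 0 < lam) (Γ f : ℝ → ℝ)
    (hΓ : ∀ x ∈ Set.Icc (0:ℝ) 1, Γ x =
      (a * α * x ^ 2 + b * β * x * (1 - x)) /
        (a * α * x ^ 2 + 2 * b * β * x * (1 - x) + a * α * (1 - x) ^ 2))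
    (hf : ∀ x ∈ Set.Icc (0:ℝ) 1, f x = (x + lam * Γ x) / (1 + lam))
    (ρ : ℝ) (hρ : ρ = a * α / (b * β)) (hρ1 : ρ ≠ 1) :
    ∀ x ∈ Set.Icc (0:ℝ) 1, (f x = x ↔ x = 0 ∨ x = 1 / 2 ∨ x = 1) := by
  intro x hx
  have hbβ : 0 < b * β := mul_pos hb hβ
  have hne : a * α ≠ b * β := fun h => hρ1 (by rw [hρ, h, div_self hbβ.ne'])
  rw [hf x hx, div_add_mul_one_add_eq_self_iff hlam.ne' (by positivity), hΓ x hx]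
  rw [mul_assoc 2 b β]
  exact symmetric_fraction_eq_self_iff (mul_pos ha hα) hbβ.le hne hx
end

section
/- If ρ > 1, then f(x) < x for every x in the open interval (0, 1/2). -/
/-!
Dividing numerator and denominator of `Γ` by `bβ` shows that `Γ` depends on the parameters only
through `ρ`. Then `Γ x - x = x (1 - x) (2x - 1) (ρ - 1) / (ρ x² + 2x(1 - x) + ρ(1 - x)²)`, which is
negative for `0 < x < 1/2` and `ρ > 1`; `f x` is a proper convex combination of `x` and `Γ x`.
-/

noncomputable def gammaOfRatio (ρ x : ℝ) : ℝ :=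
  (ρ * x ^ 2 + x * (1 - x)) / (ρ * x ^ 2 + 2 * x * (1 - x) + ρ * (1 - x) ^ 2)

lemma gammaOfRatio_div (A B x : ℝ) (hB : B ≠ 0) :
    gammaOfRatio (A / B) x =
      (A * x ^ 2 + B * x * (1 - x)) / (A * x ^ 2 + 2 * B * x * (1 - x) + A * (1 - x) ^ 2) := by
  rw [gammaOfRatio, ← div_div_div_cancel_right₀ hB (A * x ^ 2 + B * x * (1 - x))]
  congr 1 <;> field_simp

lemma gammaOfRatio_lt_self {ρ x : ℝ} (hρ : 1 < ρ) (hx₀ : 0 < x) (hx : x < 1 / 2) :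
    gammaOfRatio ρ x < x := by
  have h1x : 0 < 1 - x := by linarith
  have hden : 0 < ρ * x ^ 2 + 2 * x * (1 - x) + ρ * (1 - x) ^ 2 := by
    have : 0 < ρ := by linarith
    positivity
  have key : ρ * x ^ 2 + x * (1 - x) - x * (ρ * x ^ 2 + 2 * x * (1 - x) + ρ * (1 - x) ^ 2)
      = -(x * (1 - x) * (1 - 2 * x) * (ρ - 1)) := by ring
  have hpos : 0 < x * (1 - x) * (1 - 2 * x) * (ρ - 1) := by
    have : 0 < 1 - 2 * x := by linarith
    have : 0 < ρ - 1 := by linarith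
    positivity
  rw [gammaOfRatio, div_lt_iff₀ hden]
  linarith

lemma add_mul_div_one_add_lt {x y t : ℝ} (ht : 0 < t) (hyx : y < x) :
    (x + t * y) / (1 + t) < x := by
  rw [div_lt_iff₀ (by linarith)]
  nlinarith

theorem stmt_4_general (a b α β lam : ℝ)
    (hlam : 0 < lam) (Γ f : ℝ → ℝ)
    (hΓ : ∀ x ∈ Set.Icc (0:ℝ) 1, Γ x =
      (a * α * x ^ 2 + b * β * x * (1 - x)) /
        (a * α * x ^ 2 + 2 * b * β * x * (1 - x) + a * α * (1 - x) ^ 2))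
    (hf : ∀ x ∈ Set.Icc (0:ℝ) 1, f x = (x + lam * Γ x) / (1 + lam))
    (ρ : ℝ) (hρ : ρ = a * α / (b * β)) (hρ1 : (1 : ℝ) < ρ) :
    ∀ x ∈ Set.Ioo (0:ℝ) (1 / 2), f x < x := by
  rintro x ⟨hx₀, hx⟩
  have hxI : x ∈ Set.Icc (0:ℝ) 1 := ⟨hx₀.le, by linarith⟩
  have hB : b * β ≠ 0 := by
    rintro hB
    rw [hρ, hB, div_zero] at hρ1
    norm_num at hρ1
  have hΓρ : Γ x = gammaOfRatio ρ x := by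
    rw [hΓ x hxI, hρ, gammaOfRatio_div _ _ _ hB]
    ring
  rw [hf x hxI, hΓρ]
  exact add_mul_div_one_add_lt hlam (gammaOfRatio_lt_self hρ1 hx₀ hx)

/-- comparison of  with  on the open interval . -/
theorem stmt_4 (a b α β lam : ℝ) (ha : 0 < a) (hb : 0 < b) (hα : 0 < α) (hβ : 0 < β)
    (hlam : 0 < lam) (Γ f : ℝ → ℝ)
    (hΓ : ∀ x ∈ Set.Icc (0:ℝ) 1, Γ x =
      (a * α * x ^ 2 + b * β * x * (1 - x)) /
        (a * α * x ^ 2 + 2 * b * β * x * (1 - x) + a * α * (1 - x) ^ 2))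
    (hf : ∀ x ∈ Set.Icc (0:ℝ) 1, f x = (x + lam * Γ x) / (1 + lam))
    (ρ : ℝ) (hρ : ρ = a * α / (b * β)) (hρ1 : (1 : ℝ) < ρ) :
    ∀ x ∈ Set.Ioo (0:ℝ) (1 / 2), f x < x :=
  stmt_4_general a b α β lam hlam Γ f hΓ hf ρ hρ hρ1
end

section
/- If ρ < 1, then f(x) > x for every x in the open interval (0, 1/2). -/
/-! With `p = aα` and `q = bβ`, the numerator of `Γ x - x` factors as
`x (1 - x) (1 - 2x) (q - p)`, which is positive on `(0, 1/2)` as soon as `ρ < 1`, i.e. `p < q`.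
The update `f x` is a proper convex combination of `x` and `Γ x`, so it lies strictly above `x`. -/

noncomputable def selectionRatio (p q x : ℝ) : ℝ :=
  (p * x ^ 2 + q * x * (1 - x)) / (p * x ^ 2 + 2 * q * x * (1 - x) + p * (1 - x) ^ 2)

lemma selectionRatio_denom_pos {p q x : ℝ} (hp : 0 < p) (hq : 0 ≤ q) (hx : x ∈ Set.Icc (0 : ℝ) 1) :
    0 < p * x ^ 2 + 2 * q * x * (1 - x) + p * (1 - x) ^ 2 := by
  obtain ⟨hx0, hx1⟩ := hx
  have hsq : 0 < x ^ 2 + (1 - x) ^ 2 := by nlinarith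
  have hcross : 0 ≤ 2 * q * x * (1 - x) := by
    have : 0 ≤ 1 - x := by linarith
    positivity
  nlinarith

lemma selectionRatio_sub_self {p q x : ℝ}
    (hD : p * x ^ 2 + 2 * q * x * (1 - x) + p * (1 - x) ^ 2 ≠ 0) :
    selectionRatio p q x - x =
      x * (1 - x) * (1 - 2 * x) * (q - p) /
        (p * x ^ 2 + 2 * q * x * (1 - x) + p * (1 - x) ^ 2) := by
  rw [selectionRatio, div_sub' hD]
  ring_nf

lemma lt_selectionRatio {p q x : ℝ} (hp : 0 < p) (hpq : p < q)
    (hx : x ∈ Set.Ioo (0 : ℝ) (1 / 2)) : x < selectionRatio p q x := by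
  obtain ⟨hx0, hx2⟩ := hx
  have hD := selectionRatio_denom_pos (q := q) (x := x) hp (by linarith) ⟨hx0.le, by linarith⟩
  rw [← sub_pos, selectionRatio_sub_self hD.ne']
  have h1x : 0 < 1 - x := by linarith
  have h12x : 0 < 1 - 2 * x := by linarith
  have hqp : 0 < q - p := sub_pos.mpr hpq
  positivity

lemma lt_add_mul_div_one_add {x y t : ℝ} (ht : 0 < t) (hxy : x < y) :
    x < (x + t * y) / (1 + t) := by
  rw [lt_div_iff₀ (by linarith)]
  nlinarith

/-- comparison of  with  on the open interval . -/
theorem stmt_5 (a b α β lam : ℝ) (ha : 0 < a) (hb : 0 < b) (hα : 0 < α) (hβ : 0 < β)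
    (hlam : 0 < lam) (Γ f : ℝ → ℝ)
    (hΓ : ∀ x ∈ Set.Icc (0:ℝ) 1, Γ x =
      (a * α * x ^ 2 + b * β * x * (1 - x)) /
        (a * α * x ^ 2 + 2 * b * β * x * (1 - x) + a * α * (1 - x) ^ 2))
    (hf : ∀ x ∈ Set.Icc (0:ℝ) 1, f x = (x + lam * Γ x) / (1 + lam))
    (ρ : ℝ) (hρ : ρ = a * α / (b * β)) (hρ1 : ρ < (1 : ℝ)) :
    ∀ x ∈ Set.Ioo (0:ℝ) (1 / 2), x < f x := by
  intro x hx
  have hmem : x ∈ Set.Icc (0 : ℝ) 1 := ⟨hx.1.le, by linarith [hx.2]⟩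
  have hpq : a * α < b * β := by
    rwa [hρ, div_lt_one (by positivity)] at hρ1
  have hΓx : Γ x = selectionRatio (a * α) (b * β) x := by
    rw [hΓ x hmem, selectionRatio]
    ring
  rw [hf x hmem, hΓx]
  exact lt_add_mul_div_one_add hlam (lt_selectionRatio (by positivity) hpq hx)
end

section
/- Suppose ρ < 1. Then for any initial value Φ_0 ∈ (0, 1/2], the sequence defined by Φ_t = f(Φ_{t−1}) is monotonically increasing, remains in (0, 1/2], and converges to 1/2 as t → ∞. -/
/-!
With `A = aα`, `B = bβ` and `D(x)` the denominator of `Γ`,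
`Γ(x) - x = x(1-x)(1-2x)(B-A)/D(x)` and `1/2 - Γ(x) = A(1-2x)/(2D(x))`.
So for `A < B` the map `f`, a convex combination of the identity and `Γ`, sends `(0, 1/2]` into
itself and moves every point up, with `1/2` its only fixed point there. The orbit is therefore
increasing and bounded by `1/2`; its limit is a fixed point by continuity, hence equals `1/2`.
-/

open Set Filter Topology Function

section Iteration

variable {α : Type*}

theorem monotone_iterate_of_mapsTo_of_le_map [Preorder α] {g : α → α} {s : Set α} {x : α}
    (hmaps : MapsTo g s s) (hle : ∀ y ∈ s, y ≤ g y) (hx : x ∈ s) :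
    Monotone fun n => g^[n] x :=
  monotone_nat_of_le_succ fun n => by
    rw [iterate_succ_apply']
    exact hle _ (hmaps.iterate n hx)

theorem tendsto_iterate_of_mapsTo_of_le_map [ConditionallyCompleteLinearOrder α]
    [TopologicalSpace α] [OrderTopology α] {g : α → α} {a b x : α}
    (hmaps : MapsTo g (Ioc a b) (Ioc a b)) (hle : ∀ y ∈ Ioc a b, y ≤ g y)
    (hcont : ∀ y ∈ Ioc a b, ContinuousAt g y) (hfix : ∀ y ∈ Ioc a b, IsFixedPt g y → y = b)
    (hx : x ∈ Ioc a b) :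
    Tendsto (fun n => g^[n] x) atTop (𝓝 b) := by
  have hmem : ∀ n, g^[n] x ∈ Ioc a b := fun n => hmaps.iterate n hx
  have hbdd : BddAbove (range fun n => g^[n] x) := ⟨b, forall_mem_range.2 fun n => (hmem n).2⟩
  have hlim := tendsto_atTop_ciSup (monotone_iterate_of_mapsTo_of_le_map hmaps hle hx) hbdd
  have hL : ⨆ n, g^[n] x ∈ Ioc a b :=
    ⟨(hmem 0).1.trans_le (le_ciSup hbdd 0), ciSup_le fun n => (hmem n).2⟩
  rwa [← hfix _ hL (isFixedPt_of_tendsto_iterate hlim (hcont _ hL))]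

theorem eq_iterate_of_eqOn {f g : α → α} {s : Set α} {u : ℕ → α} (hfg : EqOn f g s)
    (hg : MapsTo g s s) (h0 : u 0 ∈ s) (hu : ∀ n, u (n + 1) = f (u n)) :
    u = fun n => g^[n] (u 0) := by
  funext n
  induction n with
  | zero => rfl
  | succ n ih => rw [hu, ih, iterate_succ_apply', hfg (hg.iterate n h0)]

end Iteration

namespace GammaMap

noncomputable section

def den (A B x : ℝ) : ℝ := A * x ^ 2 + 2 * B * x * (1 - x) + A * (1 - x) ^ 2

def gamma (A B x : ℝ) : ℝ := (A * x ^ 2 + B * x * (1 - x)) / den A B x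

def step (A B lam x : ℝ) : ℝ := (x + lam * gamma A B x) / (1 + lam)

variable {A B lam x : ℝ}

theorem den_pos (hA : 0 < A) (hB : 0 ≤ B) (hx : x ∈ Icc 0 1) : 0 < den A B x := by
  have : 0 ≤ B * (x * (1 - x)) := mul_nonneg hB (mul_nonneg hx.1 (sub_nonneg.2 hx.2))
  unfold den
  nlinarith [sq_nonneg x, sq_nonneg (1 - x), sq_nonneg (2 * x - 1)]

theorem gamma_sub_self (h : den A B x ≠ 0) :
    gamma A B x - x = x * (1 - x) * (1 - 2 * x) * (B - A) / den A B x := by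
  rw [gamma]
  field_simp
  rw [den]
  ring

theorem half_sub_gamma (h : den A B x ≠ 0) :
    1 / 2 - gamma A B x = A * (1 - 2 * x) / (2 * den A B x) := by
  rw [gamma]
  field_simp
  rw [den]
  ring

theorem step_sub_self (hlam : 1 + lam ≠ 0) :
    step A B lam x - x = lam * (gamma A B x - x) / (1 + lam) := by
  rw [step]
  field_simp
  ring

theorem half_sub_step (hlam : 1 + lam ≠ 0) :
    1 / 2 - step A B lam x = (1 / 2 - x + lam * (1 / 2 - gamma A B x)) / (1 + lam) := by
  rw [step]
  field_simp
  ring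

section HalfInterval

variable (hA : 0 < A) (hAB : A ≤ B) (hlam : 0 ≤ lam) (hx : x ∈ Icc 0 (1 / 2))
include hA hAB hlam hx

theorem self_le_step : x ≤ step A B lam x := by
  have hD := den_pos hA (hA.le.trans hAB) ⟨hx.1, by linarith [hx.2]⟩
  rw [← sub_nonneg, step_sub_self (by positivity), gamma_sub_self hD.ne']
  have : 0 ≤ x * (1 - x) * (1 - 2 * x) * (B - A) := by
    apply mul_nonneg (mul_nonneg (mul_nonneg hx.1 _) _) <;> linarith [hx.2]
  positivity

theorem step_le_half : step A B lam x ≤ 1 / 2 := by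
  have hD := den_pos hA (hA.le.trans hAB) ⟨hx.1, by linarith [hx.2]⟩
  rw [← sub_nonneg, half_sub_step (by positivity), half_sub_gamma hD.ne']
  have : 0 ≤ 1 - 2 * x := by linarith [hx.2]
  have : 0 ≤ 1 / 2 - x := by linarith [hx.2]
  positivity

end HalfInterval

theorem mapsTo_step (hA : 0 < A) (hAB : A ≤ B) (hlam : 0 ≤ lam) :
    MapsTo (step A B lam) (Ioc 0 (1 / 2)) (Ioc 0 (1 / 2)) := fun _ hx =>
  ⟨hx.1.trans_le (self_le_step hA hAB hlam (Ioc_subset_Icc_self hx)),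
    step_le_half hA hAB hlam (Ioc_subset_Icc_self hx)⟩

theorem eq_half_of_isFixedPt_step (hA : 0 < A) (hAB : A < B) (hlam : 0 < lam)
    (hx : x ∈ Ioc 0 (1 / 2)) (hfix : IsFixedPt (step A B lam) x) : x = 1 / 2 := by
  have hD := den_pos hA (hA.le.trans hAB.le) ⟨hx.1.le, by linarith [hx.2]⟩
  have h := step_sub_self (A := A) (B := B) (x := x) (lam := lam) (by positivity)
  rw [hfix.eq, sub_self, gamma_sub_self hD.ne', eq_comm] at h
  have hx1 : 1 - x ≠ 0 := by linarith [hx.2]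
  have hBA : B - A ≠ 0 := sub_ne_zero.2 hAB.ne'
  simp only [div_eq_zero_iff, mul_eq_zero, hlam.ne', hD.ne', hx.1.ne', hx1, hBA,
    (by positivity : 1 + lam ≠ 0), false_or, or_false] at h
  linarith

theorem continuousAt_step (hD : den A B x ≠ 0) (hlam : 1 + lam ≠ 0) :
    ContinuousAt (step A B lam) x := by
  have hden : ContinuousAt (den A B) x := by unfold den; fun_prop
  have hnum : ContinuousAt (fun y => A * y ^ 2 + B * y * (1 - y)) x := by fun_prop
  unfold step gamma
  exact (continuousAt_id.add (continuousAt_const.mul (hnum.div hden hD))).div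
    continuousAt_const hlam

end

end GammaMap

open GammaMap

/-- If `ρ < 1`, then for any initial value `Φ 0 ∈ (0, 1/2]`, the sequence defined by
`Φ (t+1) = f (Φ t)` is monotonically increasing, remains in `(0, 1/2]`, and converges
to `1/2`. -/
theorem stmt_8 (a b α β lam : ℝ) (ha : 0 < a) (hb : 0 < b) (hα : 0 < α) (hβ : 0 < β)
    (hlam : 0 < lam) (Γ f : ℝ → ℝ)
    (hΓ : ∀ x ∈ Set.Icc (0:ℝ) 1, Γ x =
      (a * α * x ^ 2 + b * β * x * (1 - x)) /
        (a * α * x ^ 2 + 2 * b * β * x * (1 - x) + a * α * (1 - x) ^ 2))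
    (hf : ∀ x ∈ Set.Icc (0:ℝ) 1, f x = (x + lam * Γ x) / (1 + lam))
    (ρ : ℝ) (hρ : ρ = a * α / (b * β)) (hρ1 : ρ < 1)
    (Φ : ℕ → ℝ) (hΦ0 : Φ 0 ∈ Set.Ioc (0:ℝ) (1 / 2))
    (hrec : ∀ t : ℕ, Φ (t + 1) = f (Φ t)) :
    Monotone Φ ∧ (∀ t : ℕ, Φ t ∈ Set.Ioc (0:ℝ) (1 / 2)) ∧
      Filter.Tendsto Φ Filter.atTop (nhds (1 / 2)) := by
  have hA : 0 < a * α := mul_pos ha hα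
  have hAB : a * α < b * β := by rwa [hρ, div_lt_one (mul_pos hb hβ)] at hρ1
  have hmaps := mapsTo_step hA hAB.le hlam.le
  have hfg : EqOn f (step (a * α) (b * β) lam) (Ioc 0 (1 / 2)) := fun x hx => by
    have hx' : x ∈ Icc (0 : ℝ) 1 := ⟨hx.1.le, by linarith [hx.2]⟩
    rw [hf x hx', hΓ x hx', step, gamma, den]
    ring
  have hle : ∀ x ∈ Ioc (0 : ℝ) (1 / 2), x ≤ step (a * α) (b * β) lam x := fun x hx =>
    self_le_step hA hAB.le hlam.le (Ioc_subset_Icc_self hx)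
  have hcont : ∀ x ∈ Ioc (0 : ℝ) (1 / 2), ContinuousAt (step (a * α) (b * β) lam) x :=
    fun x hx => continuousAt_step
      (den_pos hA (hA.le.trans hAB.le) ⟨hx.1.le, by linarith [hx.2]⟩).ne' (by positivity)
  rw [eq_iterate_of_eqOn hfg hmaps hΦ0 hrec]
  exact ⟨monotone_iterate_of_mapsTo_of_le_map hmaps hle hΦ0, fun t => hmaps.iterate t hΦ0,
    tendsto_iterate_of_mapsTo_of_le_map hmaps hle hcont
      (fun x hx => eq_half_of_isFixedPt_step hA hAB hlam hx) hΦ0⟩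
end

section
/- The derivative of the update function f at the fixed points 0 and 1 equals f'(0) = f'(1) = (λ + ρ)/(λρ + ρ), and at the fixed point 1/2 it equals f'(1/2) = (2λρ + ρ + 1)/((1+λ)(ρ+1)). -/
/-!
With `A = aα`, `B = bβ` we have `Γ = N / D` for the quadratics `N x = A x² + B x(1-x)` and
`D x = A x² + 2B x(1-x) + A(1-x)²`, and `D' x = 2(A-B)(2x-1)` vanishes at `1/2`. The quotient
rule gives `Γ'(0) = Γ'(1) = B/A = 1/ρ` and `Γ'(1/2) = 2A/(A+B) = 2ρ/(ρ+1)`, and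
`f' = (1 + λΓ')/(1+λ)`. Since `[0,1]` has unique derivatives, the derivative of `f` within it is
that of the rational function it agrees with.
-/

open Set

noncomputable section

def gammaNum (A B x : ℝ) : ℝ := A * x ^ 2 + B * (x * (1 - x))

def gammaDen (A B x : ℝ) : ℝ := A * x ^ 2 + 2 * B * (x * (1 - x)) + A * (1 - x) ^ 2

def gammaFrac (A B x : ℝ) : ℝ := gammaNum A B x / gammaDen A B x

def updateMap (A B lam x : ℝ) : ℝ := (x + lam * gammaFrac A B x) / (1 + lam)

end

lemma hasDerivAt_gammaNum (A B x : ℝ) :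
    HasDerivAt (gammaNum A B) (2 * A * x + B * (1 - 2 * x)) x := by
  have h : HasDerivAt (gammaNum A B) _ x := ((hasDerivAt_pow 2 x).const_mul A).fun_add
    (((hasDerivAt_id' x).fun_mul ((hasDerivAt_id' x).const_sub 1)).const_mul B)
  exact h.congr_deriv (by ring)

lemma hasDerivAt_gammaDen (A B x : ℝ) :
    HasDerivAt (gammaDen A B) (2 * (A - B) * (2 * x - 1)) x := by
  have hsub := (hasDerivAt_id' x).const_sub 1
  have h : HasDerivAt (gammaDen A B) _ x := (((hasDerivAt_pow 2 x).const_mul A).fun_add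
    (((hasDerivAt_id' x).fun_mul hsub).const_mul (2 * B))).fun_add ((hsub.fun_pow 2).const_mul A)
  exact h.congr_deriv (by ring)

variable {A B : ℝ}

lemma hasDerivAt_gammaFrac {x : ℝ} (hx : gammaDen A B x ≠ 0) :
    HasDerivAt (gammaFrac A B)
      (((2 * A * x + B * (1 - 2 * x)) * gammaDen A B x
        - gammaNum A B x * (2 * (A - B) * (2 * x - 1))) / gammaDen A B x ^ 2) x :=
  (hasDerivAt_gammaNum A B x).div (hasDerivAt_gammaDen A B x) hx

lemma hasDerivAt_gammaFrac_zero (hA : A ≠ 0) : HasDerivAt (gammaFrac A B) (B / A) 0 := by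
  have hD : gammaDen A B 0 = A := by simp [gammaDen]
  refine (hasDerivAt_gammaFrac (by rw [hD]; exact hA)).congr_deriv ?_
  simp only [hD, gammaNum]
  field_simp
  ring

lemma hasDerivAt_gammaFrac_one (hA : A ≠ 0) : HasDerivAt (gammaFrac A B) (B / A) 1 := by
  have hD : gammaDen A B 1 = A := by simp [gammaDen]
  refine (hasDerivAt_gammaFrac (by rw [hD]; exact hA)).congr_deriv ?_
  simp only [hD, gammaNum]
  field_simp
  ring

lemma hasDerivAt_gammaFrac_half (hAB : A + B ≠ 0) :
    HasDerivAt (gammaFrac A B) (2 * A / (A + B)) (1 / 2) := by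
  have hD : gammaDen A B (1 / 2) = (A + B) / 2 := by simp only [gammaDen]; ring
  refine (hasDerivAt_gammaFrac (by rw [hD]; simpa using hAB)).congr_deriv ?_
  simp only [hD, gammaNum]
  field_simp
  ring

lemma HasDerivAt.updateMap {lam x g : ℝ} (hg : HasDerivAt (gammaFrac A B) g x) :
    HasDerivAt (updateMap A B lam) ((1 + lam * g) / (1 + lam)) x :=
  ((hasDerivAt_id x).add (hg.const_mul lam)).div_const (1 + lam)

lemma derivWithin_Icc_eq_of_eqOn_updateMap {f : ℝ → ℝ} {lam x g : ℝ}
    (hf : EqOn f (updateMap A B lam) (Icc 0 1)) (hx : x ∈ Icc (0 : ℝ) 1)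
    (hg : HasDerivAt (gammaFrac A B) g x) :
    derivWithin f (Icc 0 1) x = (1 + lam * g) / (1 + lam) := by
  rw [derivWithin_congr hf (hf hx)]
  exact hg.updateMap.hasDerivWithinAt.derivWithin (uniqueDiffOn_Icc zero_lt_one x hx)

/-- The derivative of the update function `f` at the fixed points `0` and `1` equals
`(λ + ρ)/(λρ + ρ)`, and at the fixed point `1/2` it equals
`(2λρ + ρ + 1)/((1+λ)(ρ+1))`. (Derivatives are taken within the domain `[0,1]`.) -/
theorem stmt_10 (a b α β lam : ℝ) (ha : 0 < a) (hb : 0 < b) (hα : 0 < α) (hβ : 0 < β)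
    (hlam : 0 < lam) (Γ f : ℝ → ℝ)
    (hΓ : ∀ x ∈ Set.Icc (0:ℝ) 1, Γ x =
      (a * α * x ^ 2 + b * β * x * (1 - x)) /
        (a * α * x ^ 2 + 2 * b * β * x * (1 - x) + a * α * (1 - x) ^ 2))
    (hf : ∀ x ∈ Set.Icc (0:ℝ) 1, f x = (x + lam * Γ x) / (1 + lam))
    (ρ : ℝ) (hρ : ρ = a * α / (b * β)) :
    derivWithin f (Set.Icc (0:ℝ) 1) 0 = (lam + ρ) / (lam * ρ + ρ) ∧
    derivWithin f (Set.Icc (0:ℝ) 1) 1 = (lam + ρ) / (lam * ρ + ρ) ∧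
    derivWithin f (Set.Icc (0:ℝ) 1) (1 / 2) =
      (2 * lam * ρ + ρ + 1) / ((1 + lam) * (ρ + 1)) := by
  have hA : 0 < a * α := mul_pos ha hα
  have hB : 0 < b * β := mul_pos hb hβ
  have hfu : EqOn f (updateMap (a * α) (b * β) lam) (Icc 0 1) := fun x hx => by
    rw [hf x hx, hΓ x hx, updateMap, gammaFrac, gammaNum, gammaDen]
    ring
  subst hρ
  refine ⟨?_, ?_, ?_⟩
  · rw [derivWithin_Icc_eq_of_eqOn_updateMap hfu (by norm_num) (hasDerivAt_gammaFrac_zero hA.ne')]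
    field_simp
    ring
  · rw [derivWithin_Icc_eq_of_eqOn_updateMap hfu (by norm_num) (hasDerivAt_gammaFrac_one hA.ne')]
    field_simp
    ring
  · rw [derivWithin_Icc_eq_of_eqOn_updateMap hfu (by norm_num)
      (hasDerivAt_gammaFrac_half (add_pos hA hB).ne')]
    field_simp
    ring
end

section
/- Let ε ∈ (0, 1/2). There exists a constant C depending only on ε, a, α, b, β such that the following holds for all n ≥ C. Let n_R, n_B be positive integers with n_R + n_B = n, n_R ≤ n_B, and n_R ≥ n^{1/2+ε}. On a probability space, let (Y_{ij})_{1 ≤ i ≤ j ≤ n} be independent Bernoulli random variables where Y_{ij} has success probability a/n if nodes i and j have the same color and b/n otherwise (the first n_R nodes are red and the rest blue). Define R := α·(sum of Y_{ij} over ordered red–red pairs) + β·(sum of Y_{ij} over ordered red–blue pairs) and B := α·(sum of Y_{ij} over ordered blue–blue pairs) + β·(sum of Y_{ij} over ordered red–blue pairs). Then with probability at least 1 − 8·exp(−C₁·n^ε), where C₁ = min{a/12, b/6}, it holds that (1 − n^{−ε/4})·E[R]/E[R+B] < R/(R+B) < (1 + n^{−ε/4})·E[R]/E[R+B]. -/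
/-!
`R` and `B` are positive combinations of three edge counts (red–red, red–blue, blue–blue), the
red–blue count entering both. Each count is a sum, with weights in `[0, 2]`, of the independent
Bernoulli indicators of the unordered pairs, so the multiplicative Chernoff bound puts it within
a factor `1 ± δ` of its mean outside an event of probability `2 exp(-δ² mean / 8)`. Since
`n_R ≥ n^(1/2+ε)`, every mean is at least `min a b · n^(2ε)`, and for `δ = n^(-ε/4) / 4` each
exceptional probability is at most `2 exp(-C₁ n^ε)` once `n^(ε/2) ≥ 22`. Off the three exceptional
events `R` and `R + B` are within `1 ± δ` of their means, hence `R / (R + B)` is within `1 ± 4δ`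
of `E R / E (R + B)`.
-/

open MeasureTheory ProbabilityTheory Real Finset

section Bernoulli

variable {Ω : Type*} {X : Ω → ℝ}

theorem exp_mul_eq_of_zero_or_one (h01 : ∀ ω, X ω = 0 ∨ X ω = 1) (t : ℝ) :
    (fun ω => exp (t * X ω)) = fun ω => 1 + (exp t - 1) * X ω := by
  funext ω
  rcases h01 ω with h | h <;> simp [h]

variable [MeasurableSpace Ω] {μ : Measure Ω}

theorem integrable_of_zero_or_one [IsFiniteMeasure μ] (hX : Measurable X)
    (h01 : ∀ ω, X ω = 0 ∨ X ω = 1) : Integrable X μ :=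
  Integrable.of_bound hX.aestronglyMeasurable 1
    (ae_of_all _ fun ω => by rcases h01 ω with h | h <;> simp [h])

theorem integral_eq_measureReal_of_zero_or_one (hX : Measurable X)
    (h01 : ∀ ω, X ω = 0 ∨ X ω = 1) : ∫ ω, X ω ∂μ = μ.real {ω | X ω = 1} := by
  have hind : X = {ω | X ω = 1}.indicator 1 := by
    funext ω
    rcases h01 ω with h | h <;> simp [h]
  conv_lhs => rw [hind]
  exact integral_indicator_one (hX (measurableSet_singleton 1))

theorem integrable_ite_of_zero_or_one [IsFiniteMeasure μ] (P : Prop) [Decidable P]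
    (hX : Measurable X) (h01 : ∀ ω, X ω = 0 ∨ X ω = 1) :
    Integrable (fun ω => if P then X ω else 0) μ := by
  split_ifs
  exacts [integrable_of_zero_or_one hX h01, integrable_zero _ _ _]

theorem mgf_le_of_zero_or_one [IsProbabilityMeasure μ] (hX : Measurable X)
    (h01 : ∀ ω, X ω = 0 ∨ X ω = 1) (t : ℝ) :
    mgf X μ t ≤ exp ((exp t - 1) * μ.real {ω | X ω = 1}) := by
  rw [mgf, exp_mul_eq_of_zero_or_one h01, integral_add (integrable_const 1)
    ((integrable_of_zero_or_one hX h01).const_mul _), integral_const_mul,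
    integral_eq_measureReal_of_zero_or_one hX h01]
  simpa [add_comm] using add_one_le_exp ((exp t - 1) * μ.real {ω | X ω = 1})

end Bernoulli

theorem exp_mul_sub_one_le {c w : ℝ} (hc₀ : 0 ≤ c) (hcw : c ≤ w) (t : ℝ) :
    exp (t * c) - 1 ≤ c / w * (exp (t * w) - 1) := by
  rcases hc₀.eq_or_lt with rfl | hc
  · simp
  have hw : 0 < w := hc.trans_le hcw
  have h := convexOn_exp.2 (Set.mem_univ 0) (Set.mem_univ (t * w))
    (sub_nonneg.2 ((div_le_one hw).2 hcw)) (div_nonneg hc₀ hw.le) (sub_add_cancel 1 (c / w))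
  simp only [smul_eq_mul, mul_zero, zero_add, exp_zero, mul_one] at h
  rw [div_mul_eq_mul_div, mul_div_assoc, mul_div_cancel_right₀ _ hw.ne', mul_comm] at h
  linarith

theorem ProbabilityTheory.iIndepFun.const_mul {Ω ι : Type*} [MeasurableSpace Ω] {μ : Measure Ω}
    {X : ι → Ω → ℝ} (hind : iIndepFun X μ) (c : ι → ℝ) :
    iIndepFun (fun k ω => c k * X k ω) μ :=
  hind.comp (fun k x => c k * x) fun _ => measurable_const_mul _

section Chernoff

variable {Ω ι : Type*} [Fintype ι] [MeasurableSpace Ω] {μ : Measure Ω} [IsProbabilityMeasure μ]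
  {X : ι → Ω → ℝ} {c : ι → ℝ} {w m : ℝ}

theorem integrable_exp_mul_sum_mul (hind : iIndepFun X μ) (hX : ∀ k, Measurable (X k))
    (h01 : ∀ k ω, X k ω = 0 ∨ X k ω = 1) (t : ℝ) :
    Integrable (fun ω => exp (t * ∑ k, c k * X k ω)) μ := by
  have h := (hind.const_mul c).integrable_exp_mul_sum (s := univ) (t := t)
    (fun k => (hX k).const_mul _) fun k _ => by
      simp_rw [← mul_assoc, exp_mul_eq_of_zero_or_one (h01 k)]
      exact (integrable_const 1).add ((integrable_of_zero_or_one (hX k) (h01 k)).const_mul _)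
  simpa [← Finset.sum_fn] using h

theorem mgf_sum_mul_le (hind : iIndepFun X μ) (hX : ∀ k, Measurable (X k))
    (h01 : ∀ k ω, X k ω = 0 ∨ X k ω = 1) (hc : ∀ k, 0 ≤ c k ∧ c k ≤ w) (t : ℝ) :
    mgf (fun ω => ∑ k, c k * X k ω) μ t ≤
      exp ((exp (t * w) - 1) / w * ∑ k, c k * μ.real {ω | X k ω = 1}) := by
  rw [← Finset.sum_fn, (hind.const_mul c).mgf_sum (fun k => (hX k).const_mul _),
    mul_sum, exp_sum]
  refine prod_le_prod (fun k _ => mgf_nonneg) fun k _ => ?_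
  rw [mgf_const_mul, mul_comm (c k) t]
  refine (mgf_le_of_zero_or_one (hX k) (h01 k) _).trans (exp_le_exp.2 ?_)
  calc (exp (t * c k) - 1) * μ.real {ω | X k ω = 1}
      ≤ c k / w * (exp (t * w) - 1) * μ.real {ω | X k ω = 1} :=
        mul_le_mul_of_nonneg_right (exp_mul_sub_one_le (hc k).1 (hc k).2 t) measureReal_nonneg
    _ = (exp (t * w) - 1) / w * (c k * μ.real {ω | X k ω = 1}) := by ring

/-- The exponent of both Chernoff tails: `s = δ / 2` bounds the upper tail at `(1 + δ) m` and
`s = -δ / 2` the lower tail at `(1 - δ) m`. -/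
theorem exp_mul_mgf_sum_mul_le (hind : iIndepFun X μ) (hX : ∀ k, Measurable (X k))
    (h01 : ∀ k ω, X k ω = 0 ∨ X k ω = 1) (hc : ∀ k, 0 ≤ c k ∧ c k ≤ w) (hw : 0 < w)
    (hm : ∑ k, c k * μ.real {ω | X k ω = 1} = m) {s : ℝ} (hs : |s| ≤ 1) :
    exp (-(s / w) * ((1 + 2 * s) * m)) * mgf (fun ω => ∑ k, c k * X k ω) μ (s / w) ≤
      exp (-s ^ 2 * m / w) := by
  have hm₀ : 0 ≤ m := hm ▸ sum_nonneg fun k _ => mul_nonneg (hc k).1 measureReal_nonneg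
  have hexp : exp s - 1 - s ≤ s ^ 2 := (abs_le.1 (abs_exp_sub_one_sub_id_le hs)).2
  have hmgf := mgf_sum_mul_le hind hX h01 hc (s / w)
  rw [hm, div_mul_cancel₀ s hw.ne'] at hmgf
  refine (mul_le_mul_of_nonneg_left hmgf (exp_pos _).le).trans ?_
  rw [← exp_add, exp_le_exp]
  have hsplit : -(s / w) * ((1 + 2 * s) * m) + (exp s - 1) / w * m
      = -s ^ 2 * m / w + m / w * (exp s - 1 - s - s ^ 2) := by ring
  rw [hsplit, add_le_iff_nonpos_right]
  exact mul_nonpos_of_nonneg_of_nonpos (div_nonneg hm₀ hw.le) (by linarith)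

theorem measureReal_abs_sum_mul_sub_ge_le (hind : iIndepFun X μ) (hX : ∀ k, Measurable (X k))
    (h01 : ∀ k ω, X k ω = 0 ∨ X k ω = 1) (hc : ∀ k, 0 ≤ c k ∧ c k ≤ w) (hw : 0 < w)
    (hm : ∑ k, c k * μ.real {ω | X k ω = 1} = m) {δ : ℝ} (hδ₀ : 0 ≤ δ) (hδ₂ : δ ≤ 2) :
    μ.real {ω | δ * m ≤ |∑ k, c k * X k ω - m|} ≤ 2 * exp (-δ ^ 2 * m / (4 * w)) := by
  have hs : |δ / 2| ≤ 1 := by rw [abs_of_nonneg (by positivity)]; linarith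
  have hupper : μ.real {ω | (1 + 2 * (δ / 2)) * m ≤ ∑ k, c k * X k ω} ≤
      exp (-(δ / 2) ^ 2 * m / w) :=
    (measure_ge_le_exp_mul_mgf _ (by positivity) (integrable_exp_mul_sum_mul hind hX h01 _)).trans
      (exp_mul_mgf_sum_mul_le hind hX h01 hc hw hm hs)
  have hlower : μ.real {ω | ∑ k, c k * X k ω ≤ (1 + 2 * (-(δ / 2))) * m} ≤
      exp (-(-(δ / 2)) ^ 2 * m / w) :=
    (measure_le_le_exp_mul_mgf (t := -(δ / 2) / w) _
      (div_nonpos_of_nonpos_of_nonneg (by linarith) hw.le)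
      (integrable_exp_mul_sum_mul hind hX h01 _)).trans
      (exp_mul_mgf_sum_mul_le hind hX h01 hc hw hm (by rwa [abs_neg]))
  calc μ.real {ω | δ * m ≤ |∑ k, c k * X k ω - m|}
      ≤ μ.real ({ω | (1 + 2 * (δ / 2)) * m ≤ ∑ k, c k * X k ω} ∪
          {ω | ∑ k, c k * X k ω ≤ (1 + 2 * (-(δ / 2))) * m}) := by
        refine measureReal_mono fun ω hω => ?_
        rcases le_abs'.1 hω.out with h | h
        · right; rw [Set.mem_ofPred_eq]; linarith
        · left; rw [Set.mem_ofPred_eq]; linarith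
    _ ≤ exp (-(δ / 2) ^ 2 * m / w) + exp (-(-(δ / 2)) ^ 2 * m / w) :=
        (measureReal_union_le _ _).trans (add_le_add hupper hlower)
    _ = 2 * exp (-δ ^ 2 * m / (4 * w)) := by ring_nf

end Chernoff

section PairSums

variable {α : Type*}

theorem Fintype.sum_sum_eq_sum_le [Fintype α] [LinearOrder α] {M : Type*} [AddCommMonoid M]
    (f : α → α → M) :
    ∑ i, ∑ j, f i j = ∑ p : {p : α × α // p.1 ≤ p.2},
      (f p.1.1 p.1.2 + if p.1.1 = p.1.2 then 0 else f p.1.2 p.1.1) := by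
  have hswap : ∑ q : α × α with ¬ q.1 ≤ q.2, f q.1 q.2 = ∑ q : α × α with q.1 < q.2, f q.2 q.1 :=
    sum_nbij' Prod.swap Prod.swap (by simp) (by simp) (by simp) (by simp) (by simp)
  have hlt : ∑ q : α × α with q.1 < q.2, f q.2 q.1
      = ∑ q : α × α with q.1 ≤ q.2, if q.1 = q.2 then 0 else f q.2 q.1 := by
    rw [sum_filter, sum_filter]
    exact Finset.sum_congr rfl fun q _ => by grind
  rw [← sum_subtype {q : α × α | q.1 ≤ q.2} (by simp)
      (fun q => f q.1 q.2 + if q.1 = q.2 then 0 else f q.2 q.1), sum_add_distrib, ← hlt, ← hswap,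
    sum_filter_add_sum_filter_not, Fintype.sum_prod_type']

/-- The number of ordered pairs in the relation `S` lying over the unordered pair `p`. -/
def pairMultiplicity [LinearOrder α] (S : α → α → Prop) [DecidableRel S]
    (p : {p : α × α // p.1 ≤ p.2}) : ℝ :=
  (if S p.1.1 p.1.2 then 1 else 0) + if p.1.1 = p.1.2 then 0 else if S p.1.2 p.1.1 then 1 else 0

theorem pairMultiplicity_nonneg_and_le_two [LinearOrder α] (S : α → α → Prop) [DecidableRel S]
    (p : {p : α × α // p.1 ≤ p.2}) : 0 ≤ pairMultiplicity S p ∧ pairMultiplicity S p ≤ 2 := by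
  unfold pairMultiplicity
  constructor <;> split_ifs <;> norm_num

theorem sum_sum_ite_eq_sum_pairMultiplicity_mul [Fintype α] [LinearOrder α] (S : α → α → Prop)
    [DecidableRel S] {f : α → α → ℝ} (hf : ∀ i j, f i j = f j i) :
    ∑ i, ∑ j, (if S i j then f i j else 0) =
      ∑ p : {p : α × α // p.1 ≤ p.2}, pairMultiplicity S p * f p.1.1 p.1.2 := by
  rw [Fintype.sum_sum_eq_sum_le]
  refine Finset.sum_congr rfl fun p _ => ?_
  rw [pairMultiplicity, hf p.1.2 p.1.1]
  split_ifs <;> ring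

theorem sum_sum_ite_and_eq [Fintype α] (P Q : α → Prop) [DecidablePred P] [DecidablePred Q]
    {f : α → α → ℝ} {x : ℝ} (hf : ∀ i j, P i → Q j → f i j = x) :
    ∑ i, ∑ j, (if P i ∧ Q j then f i j else 0) = #{i | P i} * #{j | Q j} * x := by
  calc ∑ i, ∑ j, (if P i ∧ Q j then f i j else 0)
      = ∑ i, ∑ j, (if P i ∧ Q j then x else 0) :=
        Fintype.sum_congr _ _ fun i => Fintype.sum_congr _ _ fun j => by grind
    _ = #{i | P i} * #{j | Q j} * x := by simp [ite_and, Finset.sum_ite, mul_assoc]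

theorem Fin.card_filter_le_val {n m : ℕ} : #{i : Fin n | m ≤ (i : ℕ)} = n - m := by
  have := card_filter_add_card_filter_not (s := univ) fun i : Fin n => (i : ℕ) < m
  simp only [not_lt, card_univ, Fintype.card_fin, Fin.card_filter_val_lt] at this
  omega

end PairSums

theorem mul_rpow_le_mul_mul_div {n x y c d ε : ℝ} (hn : 0 < n) (hx : n ^ (1 / 2 + ε) ≤ x)
    (hxy : x ≤ y) (hc : 0 ≤ c) (hcd : c ≤ d) : c * n ^ (2 * ε) ≤ x * y * (d / n) := by
  have hsq : n * n ^ (2 * ε) ≤ x * y :=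
    calc n * n ^ (2 * ε) = n ^ (1 / 2 + ε) * n ^ (1 / 2 + ε) := by
          rw [← rpow_add hn, show 1 / 2 + ε + (1 / 2 + ε) = 1 + 2 * ε by ring, rpow_add hn,
            rpow_one]
      _ ≤ x * y := mul_le_mul hx (hx.trans hxy) (by positivity) ((rpow_nonneg hn.le _).trans hx)
  calc c * n ^ (2 * ε) = c * (n * n ^ (2 * ε)) / n := by field_simp
    _ ≤ d * (x * y) / n := by gcongr; exact hc.trans hcd
    _ = x * y * (d / n) := by ring

theorem div_six_mul_rpow_le {x ε c m : ℝ} (hx : 0 < x) (hx22 : 22 ≤ x ^ (ε / 2)) (hc : 0 ≤ c)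
    (hm : c * x ^ (2 * ε) ≤ m) : c / 6 * x ^ ε ≤ (x ^ (-(ε / 4)) / 4) ^ 2 * m / 8 := by
  have hsq : (x ^ (-(ε / 4))) ^ 2 * x ^ (2 * ε) = x ^ ε * x ^ (ε / 2) := by
    rw [← rpow_natCast, ← rpow_mul hx.le, ← rpow_add hx, ← rpow_add hx]
    ring_nf
  have hcx : 0 ≤ c * x ^ ε := mul_nonneg hc (rpow_pos_of_pos hx ε).le
  calc c / 6 * x ^ ε ≤ c * x ^ ε * x ^ (ε / 2) / 128 := by
        linarith [mul_le_mul_of_nonneg_left hx22 hcx]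
    _ = (x ^ (-(ε / 4)) / 4) ^ 2 * (c * x ^ (2 * ε)) / 8 := by rw [mul_assoc c, ← hsq]; ring
    _ ≤ (x ^ (-(ε / 4)) / 4) ^ 2 * m / 8 := by gcongr

section EdgeCounts

variable {α Ω : Type*} [Fintype α] [MeasurableSpace Ω] {μ : Measure Ω}
  {Y : α → α → Ω → ℝ} (S : α → α → Prop) [DecidableRel S]

theorem integrable_sum_sum_ite [IsFiniteMeasure μ] (hY : ∀ i j, Measurable (Y i j))
    (h01 : ∀ i j ω, Y i j ω = 0 ∨ Y i j ω = 1) :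
    Integrable (fun ω => ∑ i, ∑ j, if S i j then Y i j ω else 0) μ :=
  integrable_finsetSum _ fun i _ => integrable_finsetSum _ fun j _ =>
    integrable_ite_of_zero_or_one (S i j) (hY i j) (h01 i j)

theorem integral_sum_sum_ite [IsFiniteMeasure μ] (hY : ∀ i j, Measurable (Y i j))
    (h01 : ∀ i j ω, Y i j ω = 0 ∨ Y i j ω = 1) :
    ∫ ω, (∑ i, ∑ j, if S i j then Y i j ω else 0) ∂μ =
      ∑ i, ∑ j, if S i j then μ.real {ω | Y i j ω = 1} else 0 := by
  have hint i j := integrable_ite_of_zero_or_one (μ := μ) (S i j) (hY i j) (h01 i j)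
  rw [integral_finsetSum _ fun i _ => integrable_finsetSum _ fun j _ => hint i j]
  refine Finset.sum_congr rfl fun i _ => ?_
  rw [integral_finsetSum _ fun j _ => hint i j]
  refine Finset.sum_congr rfl fun j _ => ?_
  split_ifs
  exacts [integral_eq_measureReal_of_zero_or_one (hY i j) (h01 i j), integral_zero _ _]

theorem measureReal_abs_sum_sum_ite_sub_ge_le [LinearOrder α] [IsProbabilityMeasure μ]
    (hsymm : ∀ i j, Y i j = Y j i) (hY : ∀ i j, Measurable (Y i j))
    (h01 : ∀ i j ω, Y i j ω = 0 ∨ Y i j ω = 1)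
    (hind : iIndepFun (fun p : {p : α × α // p.1 ≤ p.2} => Y p.1.1 p.1.2) μ)
    {δ : ℝ} (hδ₀ : 0 ≤ δ) (hδ₂ : δ ≤ 2) :
    μ.real {ω | δ * ∫ ω', (∑ i, ∑ j, if S i j then Y i j ω' else 0) ∂μ ≤
        |∑ i, ∑ j, (if S i j then Y i j ω else 0) -
          ∫ ω', (∑ i, ∑ j, if S i j then Y i j ω' else 0) ∂μ|} ≤
      2 * exp (-δ ^ 2 * (∫ ω, (∑ i, ∑ j, if S i j then Y i j ω else 0) ∂μ) / 8) := by
  have hmean : ∑ p : {p : α × α // p.1 ≤ p.2},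
      pairMultiplicity S p * μ.real {ω | Y p.1.1 p.1.2 ω = 1} =
        ∫ ω, (∑ i, ∑ j, if S i j then Y i j ω else 0) ∂μ := by
    rw [integral_sum_sum_ite S hY h01,
      sum_sum_ite_eq_sum_pairMultiplicity_mul S fun i j => by rw [hsymm]]
  have h := measureReal_abs_sum_mul_sub_ge_le hind (fun p => hY _ _) (fun p => h01 _ _)
    (pairMultiplicity_nonneg_and_le_two S) two_pos hmean hδ₀ hδ₂
  rw [show (4 : ℝ) * 2 = 8 by norm_num, ← hmean] at h
  rw [← hmean]
  simpa only [sum_sum_ite_eq_sum_pairMultiplicity_mul S fun i j => congrFun (hsymm i j) _] using h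

theorem integral_sum_sum_ite_and_eq [IsFiniteMeasure μ] (P Q : α → Prop) [DecidablePred P]
    [DecidablePred Q] (hY : ∀ i j, Measurable (Y i j)) (h01 : ∀ i j ω, Y i j ω = 0 ∨ Y i j ω = 1)
    {x : ℝ} (hx : ∀ i j, P i → Q j → μ.real {ω | Y i j ω = 1} = x) :
    ∫ ω, (∑ i, ∑ j, if P i ∧ Q j then Y i j ω else 0) ∂μ = #{i | P i} * #{j | Q j} * x := by
  rw [integral_sum_sum_ite (fun i j => P i ∧ Q j) hY h01, sum_sum_ite_and_eq P Q hx]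

theorem measureReal_abs_sum_sum_ite_sub_ge_le_exp [LinearOrder α] [IsProbabilityMeasure μ]
    (hsymm : ∀ i j, Y i j = Y j i) (hY : ∀ i j, Measurable (Y i j))
    (h01 : ∀ i j ω, Y i j ω = 0 ∨ Y i j ω = 1)
    (hind : iIndepFun (fun p : {p : α × α // p.1 ≤ p.2} => Y p.1.1 p.1.2) μ)
    {x ε c C : ℝ} (hx : 1 ≤ x) (hε : 0 ≤ ε) (h22 : 22 ≤ x ^ (ε / 2)) (hc : 0 ≤ c) (hC : C ≤ c / 6)
    (hm : c * x ^ (2 * ε) ≤ ∫ ω, (∑ i, ∑ j, if S i j then Y i j ω else 0) ∂μ) :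
    μ.real {ω | x ^ (-(ε / 4)) / 4 * ∫ ω', (∑ i, ∑ j, if S i j then Y i j ω' else 0) ∂μ ≤
        |∑ i, ∑ j, (if S i j then Y i j ω else 0) -
          ∫ ω', (∑ i, ∑ j, if S i j then Y i j ω' else 0) ∂μ|} ≤
      2 * exp (-C * x ^ ε) := by
  have hδ : x ^ (-(ε / 4)) ≤ 1 := rpow_le_one_of_one_le_of_nonpos hx (by linarith)
  refine (measureReal_abs_sum_sum_ite_sub_ge_le S hsymm hY h01 hind (by positivity)
    (by linarith)).trans ?_
  have := div_six_mul_rpow_le (by positivity) h22 hc hm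
  have := mul_le_mul_of_nonneg_right hC (rpow_nonneg (by positivity : (0 : ℝ) ≤ x) ε)
  gcongr
  linarith

end EdgeCounts

theorem div_mem_Ioo_of_abs_sub_lt {r q M Q η : ℝ} (hM : 0 < M) (hQ : 0 < Q) (hη : η ≤ 2)
    (hr : |r - M| < η / 4 * M) (hq : |q - Q| < η / 4 * Q) :
    (1 - η) * (M / Q) < r / q ∧ r / q < (1 + η) * (M / Q) := by
  obtain ⟨hr₁, hr₂⟩ := abs_lt.1 hr
  obtain ⟨hq₁, hq₂⟩ := abs_lt.1 hq
  have hη₀ : 0 < η := by nlinarith [abs_nonneg (r - M)]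
  have hq₀ : 0 < q := by nlinarith
  have hd : |(1 - η) * (q - Q)| ≤ η / 4 * Q := by
    rw [abs_mul]
    exact (mul_le_of_le_one_left (abs_nonneg _) (abs_le.2 ⟨by linarith, by linarith⟩)).trans hq.le
  rw [← mul_div_assoc, ← mul_div_assoc, div_lt_div_iff₀ hQ hq₀, div_lt_div_iff₀ hq₀ hQ]
  constructor
  · nlinarith [mul_lt_mul_of_pos_right hr₁ hQ,
      mul_le_mul_of_nonneg_left ((le_abs_self _).trans hd) hM.le, mul_pos hη₀ hM]
  · nlinarith [mul_lt_mul_of_pos_right hr₂ hQ,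
      mul_lt_mul_of_pos_left hq₁ (by positivity : 0 < (1 + η) * M),
      mul_nonneg (mul_nonneg hη₀.le (sub_nonneg.2 hη)) (mul_pos hM hQ).le]

section Ratio

variable {Ω : Type*} [MeasurableSpace Ω] {μ : Measure Ω} [IsProbabilityMeasure μ]

theorem ofReal_one_sub_measureReal_le {s t : Set Ω} (h : sᶜ ⊆ t) :
    ENNReal.ofReal (1 - μ.real s) ≤ μ t := by
  rw [ENNReal.ofReal_sub _ measureReal_nonneg, ENNReal.ofReal_one, ofReal_measureReal,
    tsub_le_iff_left, ← measure_univ (μ := μ)]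
  exact (measure_univ_le_add_compl s).trans (by gcongr)

theorem le_measure_div_mem_Ioo {T₁ T₂ T₃ R B : Ω → ℝ} {α β η e : ℝ}
    (hR : ∀ ω, R ω = α * T₁ ω + β * T₂ ω) (hB : ∀ ω, B ω = α * T₃ ω + β * T₂ ω)
    (hα : 0 < α) (hβ : 0 < β) (hη : η ≤ 2)
    (hT₁ : Integrable T₁ μ) (hT₂ : Integrable T₂ μ) (hT₃ : Integrable T₃ μ)
    (hm₁ : 0 < ∫ ω, T₁ ω ∂μ) (hm₂ : 0 < ∫ ω, T₂ ω ∂μ) (hm₃ : 0 < ∫ ω, T₃ ω ∂μ)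
    (hbad₁ : μ.real {ω | η / 4 * ∫ ω', T₁ ω' ∂μ ≤ |T₁ ω - ∫ ω', T₁ ω' ∂μ|} ≤ e)
    (hbad₂ : μ.real {ω | η / 4 * ∫ ω', T₂ ω' ∂μ ≤ |T₂ ω - ∫ ω', T₂ ω' ∂μ|} ≤ e)
    (hbad₃ : μ.real {ω | η / 4 * ∫ ω', T₃ ω' ∂μ ≤ |T₃ ω - ∫ ω', T₃ ω' ∂μ|} ≤ e) :
    ENNReal.ofReal (1 - 3 * e) ≤
      μ {ω | (1 - η) * ((∫ ω', R ω' ∂μ) / (∫ ω', (R ω' + B ω') ∂μ)) < R ω / (R ω + B ω) ∧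
        R ω / (R ω + B ω) < (1 + η) * ((∫ ω', R ω' ∂μ) / (∫ ω', (R ω' + B ω') ∂μ))} := by
  set m₁ := ∫ ω, T₁ ω ∂μ
  set m₂ := ∫ ω, T₂ ω ∂μ
  set m₃ := ∫ ω, T₃ ω ∂μ
  have hR' : R = fun ω => α * T₁ ω + β * T₂ ω := funext hR
  have hB' : B = fun ω => α * T₃ ω + β * T₂ ω := funext hB
  have hER : ∫ ω, R ω ∂μ = α * m₁ + β * m₂ := by
    rw [hR', integral_add (hT₁.const_mul α) (hT₂.const_mul β), integral_const_mul,
      integral_const_mul]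
  have hEB : ∫ ω, B ω ∂μ = α * m₃ + β * m₂ := by
    rw [hB', integral_add (hT₃.const_mul α) (hT₂.const_mul β), integral_const_mul,
      integral_const_mul]
  have hERB : ∫ ω, (R ω + B ω) ∂μ = (α * m₁ + β * m₂) + (α * m₃ + β * m₂) := by
    rw [integral_add (hR' ▸ (hT₁.const_mul α).add (hT₂.const_mul β))
      (hB' ▸ (hT₃.const_mul α).add (hT₂.const_mul β)), hER, hEB]
  rw [hER, hERB]
  set E₁ := {ω | η / 4 * m₁ ≤ |T₁ ω - m₁|}
  set E₂ := {ω | η / 4 * m₂ ≤ |T₂ ω - m₂|}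
  set E₃ := {ω | η / 4 * m₃ ≤ |T₃ ω - m₃|}
  refine le_trans (ENNReal.ofReal_le_ofReal ?_)
    (ofReal_one_sub_measureReal_le (s := E₁ ∪ E₂ ∪ E₃) fun ω hω => ?_)
  · linarith [measureReal_union_le (μ := μ) (E₁ ∪ E₂) E₃, measureReal_union_le (μ := μ) E₁ E₂]
  simp only [E₁, E₂, E₃, Set.mem_compl_iff, Set.mem_union, Set.mem_ofPred_eq, not_or,
    not_le] at hω
  obtain ⟨⟨h₁, h₂⟩, h₃⟩ := hω
  obtain ⟨h₁l, h₁u⟩ := abs_lt.1 h₁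
  obtain ⟨h₂l, h₂u⟩ := abs_lt.1 h₂
  obtain ⟨h₃l, h₃u⟩ := abs_lt.1 h₃
  have := mul_lt_mul_of_pos_left h₁l hα
  have := mul_lt_mul_of_pos_left h₁u hα
  have := mul_lt_mul_of_pos_left h₂l hβ
  have := mul_lt_mul_of_pos_left h₂u hβ
  have := mul_lt_mul_of_pos_left h₃l hα
  have := mul_lt_mul_of_pos_left h₃u hα
  rw [Set.mem_ofPred_eq, hR, hB]
  exact div_mem_Ioo_of_abs_sub_lt (by positivity) (by positivity) hη
    (abs_lt.2 ⟨by linarith, by linarith⟩) (abs_lt.2 ⟨by linarith, by linarith⟩)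

end Ratio

/-- Concentration of the red weight fraction in the weighted stochastic block model:
for `ε ∈ (0,1/2)` there is a constant `C = C(ε,a,α,b,β)` such that for all `n ≥ C`,
with `n_R` red and `n_B` blue nodes, `n_R ≤ n_B`, `n_R ≥ n^(1/2+ε)`, and independent
Bernoulli edge indicators `Y i j` (probability `a/n` for same-color pairs, `b/n` for
cross-color pairs), writing `R` and `B` for the total weighted degrees of the red and
blue communities, with probability at least `1 − 8·exp(−C₁·n^ε)` where
`C₁ = min (a/12) (b/6)`, the ratio `R/(R+B)` lies within a factor `1 ± n^(−ε/4)` of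
`E[R]/E[R+B]`. -/
theorem stmt_15 (a b α β ε : ℝ) (ha : 0 < a) (hb : 0 < b) (hα : 0 < α) (hβ : 0 < β)
    (hε : ε ∈ Set.Ioo (0:ℝ) (1 / 2)) :
    ∃ C : ℝ, ∀ n : ℕ, C ≤ (n : ℝ) →
      ∀ nR nB : ℕ, 0 < nR → 0 < nB → nR + nB = n → nR ≤ nB →
      (n : ℝ) ^ ((1:ℝ) / 2 + ε) ≤ (nR : ℝ) →
      a / n ≤ 1 → b / n ≤ 1 →
      ∀ (Ω : Type) (mΩ : MeasurableSpace Ω) (μ : Measure Ω), IsProbabilityMeasure μ →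
      ∀ Y : Fin n → Fin n → Ω → ℝ,
      (∀ i j, Y i j = Y j i) →
      (∀ i j, Measurable (Y i j)) →
      (∀ i j ω, Y i j ω = 0 ∨ Y i j ω = 1) →
      iIndepFun
        (fun p : {p : Fin n × Fin n // p.1 ≤ p.2} => Y p.val.1 p.val.2) μ →
      (∀ i j, μ {ω | Y i j ω = 1} =
        ENNReal.ofReal (if ((i : ℕ) < nR ↔ (j : ℕ) < nR) then a / n else b / n)) →
      ∀ R B : Ω → ℝ,
      (∀ ω, R ω =
        α * ∑ i : Fin n, ∑ j : Fin n, (if (i : ℕ) < nR ∧ (j : ℕ) < nR then Y i j ω else 0)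
          + β * ∑ i : Fin n, ∑ j : Fin n, (if (i : ℕ) < nR ∧ nR ≤ (j : ℕ) then Y i j ω else 0)) →
      (∀ ω, B ω =
        α * ∑ i : Fin n, ∑ j : Fin n, (if nR ≤ (i : ℕ) ∧ nR ≤ (j : ℕ) then Y i j ω else 0)
          + β * ∑ i : Fin n, ∑ j : Fin n, (if (i : ℕ) < nR ∧ nR ≤ (j : ℕ) then Y i j ω else 0)) →
      ENNReal.ofReal (1 - 8 * Real.exp (-(min (a / 12) (b / 6)) * (n : ℝ) ^ ε)) ≤
        μ {ω | (1 - (n : ℝ) ^ (-(ε / 4))) * ((∫ ω', R ω' ∂μ) / (∫ ω', (R ω' + B ω') ∂μ))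
                 < R ω / (R ω + B ω) ∧
               R ω / (R ω + B ω)
                 < (1 + (n : ℝ) ^ (-(ε / 4))) * ((∫ ω', R ω' ∂μ) / (∫ ω', (R ω' + B ω') ∂μ))} := by
  obtain ⟨hε, -⟩ := hε
  refine ⟨22 ^ (ε / 2)⁻¹, fun n hn nR nB hnR _ hsum hRB hnR_ge _ _ Ω _ μ _ Y hsymm hY h01 hind
    hprob R B hR hB => ?_⟩
  have hn₁ : 1 ≤ (n : ℝ) := (one_le_rpow (by norm_num) (by positivity)).trans hn
  have h22 : 22 ≤ (n : ℝ) ^ (ε / 2) :=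
    (rpow_inv_le_iff_of_pos (by norm_num) (Nat.cast_nonneg n) (by positivity)).1 hn
  have hP i j :
      μ.real {ω | Y i j ω = 1} = if ((i : ℕ) < nR ↔ (j : ℕ) < nR) then a / n else b / n := by
    rw [measureReal_def, hprob, ENNReal.toReal_ofReal (by split_ifs <;> positivity)]
  have hred : #{i : Fin n | (i : ℕ) < nR} = nR := by rw [Fin.card_filter_val_lt]; omega
  have hblue : #{i : Fin n | nR ≤ (i : ℕ)} = nB := by rw [Fin.card_filter_le_val]; omega
  have hE₁ : ∫ ω, (∑ i : Fin n, ∑ j : Fin n, if (i : ℕ) < nR ∧ (j : ℕ) < nR then Y i j ω else 0) ∂μ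
      = nR * nR * (a / n) := by
    rw [integral_sum_sum_ite_and_eq _ _ hY h01 fun i j hi hj => by
      rw [hP, if_pos (iff_of_true hi hj)], hred]
  have hE₂ : ∫ ω, (∑ i : Fin n, ∑ j : Fin n, if (i : ℕ) < nR ∧ nR ≤ (j : ℕ) then Y i j ω else 0) ∂μ
      = nR * nB * (b / n) := by
    rw [integral_sum_sum_ite_and_eq _ _ hY h01 fun i j hi hj => by
      rw [hP, if_neg fun h => (h.1 hi).not_ge hj], hred, hblue]
  have hE₃ : ∫ ω, (∑ i : Fin n, ∑ j : Fin n, if nR ≤ (i : ℕ) ∧ nR ≤ (j : ℕ) then Y i j ω else 0) ∂μ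
      = nB * nB * (a / n) := by
    rw [integral_sum_sum_ite_and_eq _ _ hY h01 fun i j hi hj => by
      rw [hP, if_pos (iff_of_false hi.not_gt hj.not_gt)], hblue]
  have hn₀ : (0 : ℝ) < n := by linarith
  have hnRB : (nR : ℝ) ≤ nB := by exact_mod_cast hRB
  have hmin : 0 ≤ min a b := le_min ha.le hb.le
  have hC : min (a / 12) (b / 6) ≤ min a b / 6 :=
    (min_le_min (by linarith) le_rfl).trans_eq (min_div_div_right (by norm_num) a b)
  have hbad := fun S [DecidableRel S] => measureReal_abs_sum_sum_ite_sub_ge_le_exp S hsymm hY h01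
    hind hn₁ hε.le h22 hmin hC
  refine le_trans (ENNReal.ofReal_le_ofReal ?_) (le_measure_div_mem_Ioo hR hB hα hβ
    ((rpow_le_one_of_one_le_of_nonpos hn₁ (by linarith)).trans one_le_two)
    (integrable_sum_sum_ite _ hY h01) (integrable_sum_sum_ite _ hY h01)
    (integrable_sum_sum_ite _ hY h01) (by rw [hE₁]; positivity) (by rw [hE₂]; positivity)
    (by rw [hE₃]; positivity)
    (hbad _ (hE₁ ▸ mul_rpow_le_mul_mul_div hn₀ hnR_ge le_rfl hmin (min_le_left a b)))
    (hbad _ (hE₂ ▸ mul_rpow_le_mul_mul_div hn₀ hnR_ge hnRB hmin (min_le_right a b)))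
    (hbad _ (hE₃ ▸ mul_rpow_le_mul_mul_div hn₀ (hnR_ge.trans hnRB) le_rfl hmin (min_le_left a b))))
  linarith [exp_pos (-(min (a / 12) (b / 6)) * (n : ℝ) ^ ε)]
end
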